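/- Let ℓ ≥ 2. The group with presentation ⟨x, y, z | x² = z^{2^{ℓ-1}}, y² = x², z^{2^ℓ} = 1, [y,x] = z, [z,x] = z^{-2}, [z,y] = z^{-2}⟩ is isomorphic to the generalized quaternion group Q_{2^{ℓ+2}} of order 2^{ℓ+2}, via a ↦ y, b ↦ xy where Q_{2^{ℓ+2}} = ⟨a, b | a² = b^{2^ℓ}, b^{2^{ℓ+1}} = 1, b^a = b⁻¹⟩. -/

import Mathlib

open FreeGroup in
/-- Relators of G_⚅(1,1,ℓ) = ⟨x,y,z | x² = z^{2^{ℓ-1}}, y² = x², z^{2^ℓ} = 1, [y,x] = z,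
[z,x] = z⁻², [z,y] = z⁻²⟩ (convention [y,x] = y⁻¹x⁻¹yx; generators 0 ↦ x, 1 ↦ y, 2 ↦ z). -/
def relsG6 (ℓ : ℕ) : Set (FreeGroup (Fin 3)) :=
  { (of 0) ^ 2 * ((of 2) ^ (2 ^ (ℓ - 1)))⁻¹,
    (of 1) ^ 2 * ((of 0) ^ 2)⁻¹,
    (of 2) ^ (2 ^ ℓ),
    (of 1)⁻¹ * (of 0)⁻¹ * of 1 * of 0 * (of 2)⁻¹,
    (of 2)⁻¹ * (of 0)⁻¹ * of 2 * of 0 * (of 2) ^ 2,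
    (of 2)⁻¹ * (of 1)⁻¹ * of 2 * of 1 * (of 2) ^ 2 }

abbrev G6 (ℓ : ℕ) := PresentedGroup (relsG6 ℓ)

open FreeGroup in
/-- Relators of the generalized quaternion group
Q_{2^{ℓ+2}} = ⟨a, b | a² = b^{2^ℓ}, b^{2^{ℓ+1}} = 1, b^a = b⁻¹⟩
(with b^a = a⁻¹ba; generators 0 ↦ a, 1 ↦ b). -/
def relsQ (ℓ : ℕ) : Set (FreeGroup (Fin 2)) :=
  { (of 0) ^ 2 * ((of 1) ^ (2 ^ ℓ))⁻¹,
    (of 1) ^ (2 ^ (ℓ + 1)),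
    (of 0)⁻¹ * of 1 * of 0 * of 1 }

abbrev Qgen (ℓ : ℕ) := PresentedGroup (relsQ ℓ)

/-!
In `G6 ℓ`, `y` inverts `z` by conjugation and `x⁴ = z^{2^ℓ} = 1`, so
`(xy)² = x (yx) y = x² y z y = x² y² z⁻¹ = z⁻¹`; hence `a ↦ y, b ↦ xy` respects the quaternion
relations. Conversely `x ↦ ba⁻¹, y ↦ a, z ↦ b⁻²` respects the relations of `G6 ℓ`, and by
`(xy)² = z⁻¹` the two homomorphisms are mutually inverse on generators.
-/

theorem PresentedGroup.lift_of_eq_one {α : Type*} {rels : Set (FreeGroup α)} {r : FreeGroup α}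
    (hr : r ∈ rels) : FreeGroup.lift (PresentedGroup.of : α → PresentedGroup rels) r = 1 := by
  rw [show FreeGroup.lift PresentedGroup.of = PresentedGroup.mk rels from
    FreeGroup.ext_hom _ _ fun _ => rfl]
  exact PresentedGroup.one_of_mem hr

section Relations

variable {G : Type*} [Group G]

structure IsQuaternionPair (ℓ : ℕ) (a b : G) : Prop where
  sq_left : a ^ 2 = b ^ 2 ^ ℓ
  pow_right : b ^ 2 ^ (ℓ + 1) = 1
  conj_right : a⁻¹ * b * a = b⁻¹

structure IsG6Triple (ℓ : ℕ) (x y z : G) : Prop where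
  sq_x : x ^ 2 = z ^ 2 ^ (ℓ - 1)
  sq_y : y ^ 2 = x ^ 2
  pow_z : z ^ 2 ^ ℓ = 1
  commutator_y_x : y⁻¹ * x⁻¹ * y * x = z
  commutator_z_x : z⁻¹ * x⁻¹ * z * x = (z ^ 2)⁻¹
  commutator_z_y : z⁻¹ * y⁻¹ * z * y = (z ^ 2)⁻¹

theorem lift_relsQ_eq_one_iff {ℓ : ℕ} (f : Fin 2 → G) :
    (∀ r ∈ relsQ ℓ, FreeGroup.lift f r = 1) ↔ IsQuaternionPair ℓ (f 0) (f 1) := by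
  simp only [relsQ, Set.forall_mem_insert, Set.mem_singleton_iff, forall_eq, map_mul, map_pow,
    map_inv, inv_inv, FreeGroup.lift_apply_of, ← eq_inv_iff_mul_eq_one]
  exact ⟨fun ⟨h₁, h₂, h₃⟩ => ⟨h₁, h₂, h₃⟩, fun ⟨h₁, h₂, h₃⟩ => ⟨h₁, h₂, h₃⟩⟩

theorem lift_relsG6_eq_one_iff {ℓ : ℕ} (f : Fin 3 → G) :
    (∀ r ∈ relsG6 ℓ, FreeGroup.lift f r = 1) ↔ IsG6Triple ℓ (f 0) (f 1) (f 2) := by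
  simp only [relsG6, Set.forall_mem_insert, Set.mem_singleton_iff, forall_eq, map_mul, map_pow,
    map_inv, inv_inv, FreeGroup.lift_apply_of, ← eq_inv_iff_mul_eq_one]
  exact ⟨fun ⟨h₁, h₂, h₃, h₄, h₅, h₆⟩ => ⟨h₁, h₂, h₃, h₄, h₅, h₆⟩,
    fun ⟨h₁, h₂, h₃, h₄, h₅, h₆⟩ => ⟨h₁, h₂, h₃, h₄, h₅, h₆⟩⟩

namespace IsG6Triple

variable {ℓ : ℕ} {x y z : G}

theorem sq_x_mul_sq_x (h : IsG6Triple ℓ x y z) (hℓ : 1 ≤ ℓ) : x ^ 2 * x ^ 2 = 1 := by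
  obtain ⟨k, rfl⟩ := Nat.exists_eq_add_of_le' hℓ
  rw [h.sq_x, Nat.add_sub_cancel, ← pow_add, ← two_mul, ← pow_succ', h.pow_z]

theorem mul_sq (h : IsG6Triple ℓ x y z) (hℓ : 1 ≤ ℓ) : (x * y) ^ 2 = z⁻¹ := by
  have hyx : y * x = x * y * z := by rw [← h.commutator_y_x]; group
  have hzy : z * y = y * z⁻¹ := by
    calc z * y = y * (z * (z⁻¹ * y⁻¹ * z * y)) := by group
      _ = y * z⁻¹ := by rw [h.commutator_z_y]; group
  calc (x * y) ^ 2 = x * (y * x) * y := by rw [sq]; group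
    _ = x * x * y * (z * y) := by rw [hyx]; group
    _ = x ^ 2 * y ^ 2 * z⁻¹ := by rw [hzy]; simp only [sq]; group
    _ = z⁻¹ := by rw [h.sq_y, h.sq_x_mul_sq_x hℓ, one_mul]

theorem isQuaternionPair (h : IsG6Triple ℓ x y z) (hℓ : 1 ≤ ℓ) :
    IsQuaternionPair ℓ y (x * y) := by
  have hx4 := h.sq_x_mul_sq_x hℓ
  obtain ⟨k, rfl⟩ := Nat.exists_eq_add_of_le' hℓ
  refine ⟨?_, ?_, ?_⟩
  · rw [pow_succ' 2, pow_mul, h.mul_sq hℓ, inv_pow, ← Nat.add_sub_cancel k 1, ← h.sq_x, h.sq_y]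
    exact eq_inv_of_mul_eq_one_left hx4
  · rw [pow_succ' 2, pow_mul, h.mul_sq hℓ, inv_pow, h.pow_z, inv_one]
  · calc y⁻¹ * (x * y) * y = y⁻¹ * x * y ^ 2 := by simp only [sq]; group
      _ = y⁻¹ * x⁻¹ * (x ^ 2 * x ^ 2) := by rw [h.sq_y]; simp only [sq]; group
      _ = (x * y)⁻¹ := by rw [hx4]; group

end IsG6Triple

namespace IsQuaternionPair

variable {ℓ : ℕ} {a b : G}

theorem conj_zpow (h : IsQuaternionPair ℓ a b) (n : ℤ) : a⁻¹ * b ^ n * a = b ^ (-n) := by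
  have := _root_.conj_zpow (a := a⁻¹) (b := b) (i := n)
  rwa [inv_inv, h.conj_right, inv_zpow, ← zpow_neg, eq_comm] at this

theorem conj_inv_zpow (h : IsQuaternionPair ℓ a b) (n : ℤ) : a * b ^ n * a⁻¹ = b ^ (-n) := by
  calc a * b ^ n * a⁻¹ = a * (a⁻¹ * b ^ (-n) * a) * a⁻¹ := by rw [h.conj_zpow, neg_neg]
    _ = b ^ (-n) := by group

theorem isG6Triple (h : IsQuaternionPair ℓ a b) (hℓ : 1 ≤ ℓ) :
    IsG6Triple ℓ (b * a⁻¹) a (b ^ 2)⁻¹ := by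
  have ha4 : a ^ 2 * a ^ 2 = 1 := by
    rw [h.sq_left, ← pow_add, ← two_mul, ← pow_succ', h.pow_right]
  have hx2 : (b * a⁻¹) ^ 2 = (a ^ 2)⁻¹ := by
    calc (b * a⁻¹) ^ 2
      _ = b * (a⁻¹ * b ^ (1 : ℤ) * a) * (a ^ 2)⁻¹ := by simp only [sq]; group
      _ = (a ^ 2)⁻¹ := by rw [h.conj_zpow]; group
  obtain ⟨k, rfl⟩ := Nat.exists_eq_add_of_le' hℓ
  refine ⟨?_, ?_, ?_, ?_, ?_, ?_⟩
  · rw [hx2, h.sq_left, Nat.add_sub_cancel, inv_pow, ← pow_mul, ← pow_succ']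
  · rw [hx2]; exact eq_inv_of_mul_eq_one_left ha4
  · rw [inv_pow, ← pow_mul, ← pow_succ', h.pow_right, inv_one]
  · calc a⁻¹ * (b * a⁻¹)⁻¹ * a * (b * a⁻¹)
      _ = b⁻¹ * (a * b ^ (1 : ℤ) * a⁻¹) := by group
      _ = (b ^ 2)⁻¹ := by rw [h.conj_inv_zpow]; group
  · calc (b ^ 2)⁻¹⁻¹ * (b * a⁻¹)⁻¹ * (b ^ 2)⁻¹ * (b * a⁻¹)
      _ = b ^ 2 * (a * b ^ (-2 : ℤ) * a⁻¹) := by group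
      _ = ((b ^ 2)⁻¹ ^ 2)⁻¹ := by rw [h.conj_inv_zpow]; group
  · calc (b ^ 2)⁻¹⁻¹ * a⁻¹ * (b ^ 2)⁻¹ * a
      _ = b ^ 2 * (a⁻¹ * b ^ (-2 : ℤ) * a) := by group
      _ = ((b ^ 2)⁻¹ ^ 2)⁻¹ := by rw [h.conj_zpow]; group

end IsQuaternionPair

end Relations

section Isomorphism

open PresentedGroup

variable {ℓ : ℕ}

theorem isG6Triple_of : IsG6Triple ℓ (of 0 : G6 ℓ) (of 1) (of 2) :=
  (lift_relsG6_eq_one_iff _).1 fun _ => lift_of_eq_one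

theorem isQuaternionPair_of : IsQuaternionPair ℓ (of 0 : Qgen ℓ) (of 1) :=
  (lift_relsQ_eq_one_iff _).1 fun _ => lift_of_eq_one

def quaternionToG6 (hℓ : 1 ≤ ℓ) : Qgen ℓ →* G6 ℓ :=
  toGroup ((lift_relsQ_eq_one_iff ![of 1, of 0 * of 1]).2 (isG6Triple_of.isQuaternionPair hℓ))

def g6ToQuaternion (hℓ : 1 ≤ ℓ) : G6 ℓ →* Qgen ℓ :=
  toGroup ((lift_relsG6_eq_one_iff ![of 1 * (of 0)⁻¹, of 0, (of 1 ^ 2)⁻¹]).2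
    (isQuaternionPair_of.isG6Triple hℓ))

def quaternionEquivG6 (hℓ : 1 ≤ ℓ) : Qgen ℓ ≃* G6 ℓ :=
  (quaternionToG6 hℓ).toMulEquiv (g6ToQuaternion hℓ)
    (PresentedGroup.ext fun i => by fin_cases i <;> simp [quaternionToG6, g6ToQuaternion])
    (PresentedGroup.ext fun i => by
      fin_cases i <;> simp [quaternionToG6, g6ToQuaternion, isG6Triple_of.mul_sq hℓ])

end Isomorphism

/-- For ℓ ≥ 2, the group G_⚅(1,1,ℓ) is isomorphic to the generalized
quaternion group Q_{2^{ℓ+2}} via a ↦ y, b ↦ xy. -/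
theorem stmt13 (ℓ : ℕ) (hℓ : 2 ≤ ℓ) :
    ∃ φ : Qgen ℓ ≃* G6 ℓ,
      φ (PresentedGroup.of 0) = PresentedGroup.of 1 ∧
      φ (PresentedGroup.of 1) = PresentedGroup.of 0 * PresentedGroup.of 1 :=
  ⟨quaternionEquivG6 (by omega), by simp [quaternionEquivG6, quaternionToG6],
    by simp [quaternionEquivG6, quaternionToG6]⟩
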